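/- Let A ∈ ℝ^{m×n}, let Θ ∈ ℝ^{n×n} be diagonal with strictly positive diagonal entries, and let R_d ∈ ℝ^{m×m} be symmetric positive definite. Then every eigenvalue μ of the symmetric matrix M = [[−Θ^{-1}, Aᵀ],[A, R_d]] satisfies μ ≥ (1/2) ( (λ_min(R_d) − max_j (Θ^{-1})_{jj}) − [ (max_j (Θ^{-1})_{jj} + λ_min(R_d))² + 4 σ_max(A)² ]^{1/2} ). In particular this lower-bounds the most negative eigenvalue μ_{-n} of M. -/

import Mathlib

/-!
For an eigenvector `x = (u, v)` of `M` with eigenvalue `μ`,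
`μ ‖x‖² = xᵀ M x = -uᵀ Θ⁻¹ u + 2 vᵀ A u + vᵀ R_d v ≥ -θ ‖u‖² - 2σ ‖u‖ ‖v‖ + λ ‖v‖²`,
where `θ = max_j (Θ⁻¹)_jj`, `λ = λ_min(R_d)` and `σ = σ_max(A)`. The right-hand side is the
quadratic form of the `2 × 2` matrix `[[-θ, -σ], [-σ, λ]]` at `(‖u‖, ‖v‖)`, so it is at least
the smaller eigenvalue `½((λ - θ) - √((θ + λ)² + 4σ²))` of that matrix times `‖u‖² + ‖v‖² = ‖x‖²`.
-/

open Matrix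

/-- Spectral norm (largest singular value) of a real matrix. -/
noncomputable def specNorm {m n : ℕ} (A : Matrix (Fin m) (Fin n) ℝ) : ℝ :=
  Real.sqrt (⨆ i, (Matrix.isHermitian_mul_conjTranspose_self A).eigenvalues i)

open scoped MatrixOrder

theorem half_sub_sqrt_mul_sq_add_sq_le (θ l σ a b : ℝ) :
    1 / 2 * ((l - θ) - √((θ + l) ^ 2 + 4 * σ ^ 2)) * (a ^ 2 + b ^ 2)
      ≤ -θ * a ^ 2 - 2 * σ * a * b + l * b ^ 2 := by
  set r := √((θ + l) ^ 2 + 4 * σ ^ 2)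
  have hr : r ^ 2 = (θ + l) ^ 2 + 4 * σ ^ 2 := Real.sq_sqrt (by positivity)
  have habs : |θ + l| ≤ r := Real.abs_le_sqrt (le_add_of_nonneg_right (by positivity))
  obtain ⟨hp, hq⟩ : 0 ≤ r - θ - l ∧ 0 ≤ r + θ + l := by
    constructor <;> linarith [abs_le.mp habs]
  -- `r - θ - l` and `r + θ + l` are nonnegative with product `(2σ)²`: AM-GM.
  have hsq : (4 * σ * a * b) ^ 2 ≤ ((r - θ - l) * a ^ 2 + (r + θ + l) * b ^ 2) ^ 2 := by
    have hgap : ((r - θ - l) * a ^ 2 + (r + θ + l) * b ^ 2) ^ 2 - (4 * σ * a * b) ^ 2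
        = ((r - θ - l) * a ^ 2 - (r + θ + l) * b ^ 2) ^ 2 := by
      linear_combination (4 * a ^ 2 * b ^ 2) * hr
    linarith [sq_nonneg ((r - θ - l) * a ^ 2 - (r + θ + l) * b ^ 2)]
  linarith [(abs_le_of_sq_le_sq' hsq (by positivity)).2]

namespace Matrix

variable {ι κ : Type*} [Fintype ι] [Fintype κ]

theorem sq_dotProduct_le_dotProduct_self_mul (u w : ι → ℝ) :
    (u ⬝ᵥ w) ^ 2 ≤ (u ⬝ᵥ u) * (w ⬝ᵥ w) := by
  simpa only [dotProduct, sq] using Finset.sum_mul_sq_le_sq_mul_sq Finset.univ u w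

theorem dotProduct_mulVec_le_iSup_diag_mul {D : Matrix ι ι ℝ} (hD : D.IsDiag) (u : ι → ℝ) :
    u ⬝ᵥ D *ᵥ u ≤ (⨆ j, D j j) * (u ⬝ᵥ u) := by
  classical
  conv_lhs => rw [← hD.diagonal_diag]
  simp only [dotProduct, mulVec_diagonal, diag_apply, Finset.mul_sum]
  refine Finset.sum_le_sum fun j _ => ?_
  have hj : D j j ≤ ⨆ j, D j j :=
    le_ciSup (f := fun j => D j j) (Set.finite_range _).bddAbove j
  simpa [mul_left_comm] using mul_le_mul_of_nonneg_right hj (mul_self_nonneg (u j))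

section Hermitian

variable [DecidableEq ι] {B : Matrix ι ι ℝ}

theorem IsHermitian.mul_dotProduct_self_le_dotProduct_mulVec (hB : B.IsHermitian) {c : ℝ}
    (hc : ∀ i, c ≤ hB.eigenvalues i) (v : ι → ℝ) : c * (v ⬝ᵥ v) ≤ v ⬝ᵥ B *ᵥ v := by
  have hcB : algebraMap ℝ _ c ≤ B := by
    rw [algebraMap_le_iff_le_spectrum hB.isSelfAdjoint, hB.spectrum_real_eq_range_eigenvalues]
    rintro _ ⟨i, rfl⟩
    exact hc i
  simpa [sub_mulVec, Algebra.algebraMap_eq_smul_one, smul_mulVec, dotProduct_smul] using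
    (le_iff.mp hcB).dotProduct_mulVec_nonneg v

theorem IsHermitian.dotProduct_mulVec_le_mul_dotProduct_self (hB : B.IsHermitian) {c : ℝ}
    (hc : ∀ i, hB.eigenvalues i ≤ c) (v : ι → ℝ) : v ⬝ᵥ B *ᵥ v ≤ c * (v ⬝ᵥ v) := by
  have hBc : B ≤ algebraMap ℝ _ c := by
    rw [le_algebraMap_iff_spectrum_le hB.isSelfAdjoint, hB.spectrum_real_eq_range_eigenvalues]
    rintro _ ⟨i, rfl⟩
    exact hc i
  simpa [sub_mulVec, Algebra.algebraMap_eq_smul_one, smul_mulVec, dotProduct_smul] using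
    (le_iff.mp hBc).dotProduct_mulVec_nonneg v

end Hermitian

theorem le_eigenvalue_of_forall_le_dotProduct_mulVec {M : Matrix ι ι ℝ} {c μ : ℝ}
    {x : ι → ℝ} (hM : ∀ y, c * (y ⬝ᵥ y) ≤ y ⬝ᵥ M *ᵥ y) (hx : x ≠ 0) (hμ : M *ᵥ x = μ • x) :
    c ≤ μ := by
  have hxx : 0 < x ⬝ᵥ x := by
    obtain ⟨i, hi⟩ := Function.ne_iff.mp hx
    exact Finset.sum_pos' (fun j _ => mul_self_nonneg (x j))
      ⟨i, Finset.mem_univ i, mul_self_pos.mpr hi⟩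
  have := hM x
  rw [hμ, dotProduct_smul, smul_eq_mul] at this
  exact le_of_mul_le_mul_right this hxx

theorem dotProduct_fromBlocks_transpose_mulVec (P : Matrix ι ι ℝ) (B : Matrix κ ι ℝ)
    (R : Matrix κ κ ℝ) (u : ι → ℝ) (v : κ → ℝ) :
    Sum.elim u v ⬝ᵥ fromBlocks P Bᵀ B R *ᵥ Sum.elim u v
      = u ⬝ᵥ P *ᵥ u + 2 * (v ⬝ᵥ B *ᵥ u) + v ⬝ᵥ R *ᵥ v := by
  rw [fromBlocks_mulVec, Sum.elim_comp_inl, Sum.elim_comp_inr, sumElim_dotProduct_sumElim,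
    dotProduct_add, dotProduct_add, dotProduct_mulVec u Bᵀ, vecMul_transpose,
    dotProduct_comm (B *ᵥ u)]
  ring

theorem mul_dotProduct_self_le_dotProduct_fromBlocks_mulVec {P : Matrix ι ι ℝ}
    {B : Matrix κ ι ℝ} {R : Matrix κ κ ℝ} {θ l σ : ℝ} (hσ : 0 ≤ σ)
    (hP : ∀ u, -θ * (u ⬝ᵥ u) ≤ u ⬝ᵥ P *ᵥ u) (hR : ∀ v, l * (v ⬝ᵥ v) ≤ v ⬝ᵥ R *ᵥ v)
    (hB : ∀ u v, (v ⬝ᵥ B *ᵥ u) ^ 2 ≤ σ ^ 2 * (u ⬝ᵥ u) * (v ⬝ᵥ v)) (x : ι ⊕ κ → ℝ) :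
    1 / 2 * ((l - θ) - √((θ + l) ^ 2 + 4 * σ ^ 2)) * (x ⬝ᵥ x)
      ≤ x ⬝ᵥ fromBlocks P Bᵀ B R *ᵥ x := by
  obtain ⟨u, v, rfl⟩ : ∃ u v, x = Sum.elim u v := ⟨_, _, (Sum.elim_comp_inl_inr x).symm⟩
  rw [dotProduct_fromBlocks_transpose_mulVec, sumElim_dotProduct_sumElim]
  have hu : √(u ⬝ᵥ u) ^ 2 = u ⬝ᵥ u := Real.sq_sqrt (dotProduct_self_star_nonneg u)
  have hv : √(v ⬝ᵥ v) ^ 2 = v ⬝ᵥ v := Real.sq_sqrt (dotProduct_self_star_nonneg v)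
  have hcross : -(σ * √(u ⬝ᵥ u) * √(v ⬝ᵥ v)) ≤ v ⬝ᵥ B *ᵥ u := by
    refine (abs_le_of_sq_le_sq' ?_ (by positivity)).1
    rw [mul_pow, mul_pow, hu, hv]
    exact hB u v
  have := half_sub_sqrt_mul_sq_add_sq_le θ l σ (√(u ⬝ᵥ u)) (√(v ⬝ᵥ v))
  rw [hu, hv] at this
  linarith [hP u, hR v]

end Matrix

theorem eigenvalues_mul_conjTranspose_le_sq_specNorm {m n : ℕ}
    (A : Matrix (Fin m) (Fin n) ℝ) (i : Fin m) :
    (isHermitian_mul_conjTranspose_self A).eigenvalues i ≤ specNorm A ^ 2 := by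
  have hi := le_ciSup
    (Set.finite_range (isHermitian_mul_conjTranspose_self A).eigenvalues).bddAbove i
  rw [specNorm, Real.sq_sqrt ((eigenvalues_self_mul_conjTranspose_nonneg A i).trans hi)]
  exact hi

theorem sq_dotProduct_mulVec_le_sq_specNorm_mul {m n : ℕ} (A : Matrix (Fin m) (Fin n) ℝ)
    (u : Fin n → ℝ) (v : Fin m → ℝ) : (v ⬝ᵥ A *ᵥ u) ^ 2 ≤ specNorm A ^ 2 * (u ⬝ᵥ u) * (v ⬝ᵥ v) := by
  have hAv : (Aᵀ *ᵥ v) ⬝ᵥ (Aᵀ *ᵥ v) ≤ specNorm A ^ 2 * (v ⬝ᵥ v) := by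
    have := (isHermitian_mul_conjTranspose_self A).dotProduct_mulVec_le_mul_dotProduct_self
      (eigenvalues_mul_conjTranspose_le_sq_specNorm A) v
    rwa [conjTranspose_eq_transpose_of_trivial, ← mulVec_mulVec, dotProduct_mulVec,
      ← mulVec_transpose] at this
  rw [dotProduct_mulVec, ← mulVec_transpose, dotProduct_comm]
  calc (u ⬝ᵥ Aᵀ *ᵥ v) ^ 2 ≤ (u ⬝ᵥ u) * ((Aᵀ *ᵥ v) ⬝ᵥ (Aᵀ *ᵥ v)) :=
        sq_dotProduct_le_dotProduct_self_mul u _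
    _ ≤ (u ⬝ᵥ u) * (specNorm A ^ 2 * (v ⬝ᵥ v)) :=
        mul_le_mul_of_nonneg_left hAv (dotProduct_self_star_nonneg u)
    _ = specNorm A ^ 2 * (u ⬝ᵥ u) * (v ⬝ᵥ v) := by ring

theorem stmt_10 {m n : ℕ} (A : Matrix (Fin m) (Fin n) ℝ)
    (d : Fin n → ℝ)
    (Rd : Matrix (Fin m) (Fin m) ℝ) (hRd : Rd.PosDef)
    (M : Matrix (Fin n ⊕ Fin m) (Fin n ⊕ Fin m) ℝ)
    (hMdef : M = Matrix.fromBlocks (-(Matrix.diagonal d)⁻¹) Aᵀ A Rd) :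
    ∀ μ : ℝ, ∀ x : Fin n ⊕ Fin m → ℝ, x ≠ 0 → M.mulVec x = μ • x →
      (1 / 2) * (((⨅ i, hRd.1.eigenvalues i) - ⨆ j, (Matrix.diagonal d)⁻¹ j j) -
        Real.sqrt (((⨆ j, (Matrix.diagonal d)⁻¹ j j) + ⨅ i, hRd.1.eigenvalues i) ^ 2 +
          4 * specNorm A ^ 2)) ≤ μ := by
  rintro μ x hx hμ
  subst hMdef
  refine le_eigenvalue_of_forall_le_dotProduct_mulVec (fun y => ?_) hx hμ
  refine mul_dotProduct_self_le_dotProduct_fromBlocks_mulVec (Real.sqrt_nonneg _) (fun u => ?_)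
    (hRd.1.mul_dotProduct_self_le_dotProduct_mulVec
      fun i => ciInf_le (Set.finite_range _).bddBelow i)
    (sq_dotProduct_mulVec_le_sq_specNorm_mul A) y
  have hdiag : ((diagonal d)⁻¹).IsDiag := inv_diagonal d ▸ isDiag_diagonal _
  rw [neg_mulVec, dotProduct_neg, neg_mul, neg_le_neg_iff]
  exact dotProduct_mulVec_le_iSup_diag_mul hdiag u
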